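/- Let E be a reflexive Banach space continuously embedded in a Banach space E₀, and let H⁺ be a trajectory space, i.e. an arbitrary subset of C([0,∞);E₀) ∩ L∞(0,∞;E). Suppose there exists an absorbing set P for H⁺ which is relatively compact in C([0,∞);E₀) (with the topology of uniform convergence on compact subintervals) and bounded in L∞(0,∞;E). Then there exists a minimal trajectory attractor U for the trajectory space H⁺. -/

import Mathlib

open scoped NNReal
open Filter Topology

noncomputable section

variable {E E₀ : Type*} [NormedAddCommGroup E] [NormedSpace ℝ E]
  [NormedAddCommGroup E₀] [NormedSpace ℝ E₀]

/-- The translation (shift) operator `T(h)u(t) = u(t+h)` on `C([0,∞); E₀)`. -/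
def shiftOp (h : ℝ≥0) (u : C(ℝ≥0, E₀)) : C(ℝ≥0, E₀) :=
  u.comp ⟨fun t => t + h, by continuity⟩

/-- `u` takes values in `E` (via the embedding `j`) with `E`-norm bounded by `R`. -/
def BddInE (j : E →L[ℝ] E₀) (R : ℝ) (u : C(ℝ≥0, E₀)) : Prop :=
  ∀ t : ℝ≥0, ∃ x : E, j x = u t ∧ ‖x‖ ≤ R

/-- `u ∈ L∞(0,∞;E)`: `u` takes values in `E` with bounded `E`-norm. -/
def MemLinftyE (j : E →L[ℝ] E₀) (u : C(ℝ≥0, E₀)) : Prop :=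
  ∃ R : ℝ, BddInE j R u

/-- A family of trajectories is bounded in `L∞(0,∞;E)`. -/
def BddFamilyE (j : E →L[ℝ] E₀) (B : Set C(ℝ≥0, E₀)) : Prop :=
  ∃ R : ℝ, ∀ u ∈ B, BddInE j R u

/-- `P` is attracting for the trajectory space `Hplus`: for every `B ⊆ Hplus` bounded in
`L∞(0,∞;E)`, the shifts of `B` approach `P` uniformly, in the uniformity of uniform
convergence on compact subintervals on `C([0,∞); E₀)`
(i.e. `sup_{u∈B} inf_{v∈P} dist(T(h)u, v) → 0` as `h → ∞`). -/
def IsAttracting (j : E →L[ℝ] E₀) (Hplus P : Set C(ℝ≥0, E₀)) : Prop :=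
  ∀ B ⊆ Hplus, BddFamilyE j B →
    ∀ V ∈ uniformity C(ℝ≥0, E₀), ∃ h₀ : ℝ≥0, ∀ h : ℝ≥0, h₀ ≤ h →
      ∀ u ∈ B, ∃ v ∈ P, (shiftOp h u, v) ∈ V

/-- `P` is absorbing for the trajectory space `Hplus`: every `B ⊆ Hplus` bounded in
`L∞(0,∞;E)` satisfies `T(t)B ⊆ P` for all sufficiently large `t`. -/
def IsAbsorbing (j : E →L[ℝ] E₀) (Hplus P : Set C(ℝ≥0, E₀)) : Prop :=
  ∀ B ⊆ Hplus, BddFamilyE j B → ∃ h : ℝ≥0, ∀ t : ℝ≥0, h ≤ t → shiftOp t '' B ⊆ P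

/-- `U` is the minimal trajectory attractor for the trajectory space `Hplus`:
it is compact in `C([0,∞); E₀)`, bounded in `L∞(0,∞;E)`, strictly shift-invariant,
attracting, and contained in every other set with these properties. -/
def IsMinTrajAttractor (j : E →L[ℝ] E₀) (Hplus U : Set C(ℝ≥0, E₀)) : Prop :=
  (IsCompact U ∧ BddFamilyE j U) ∧
    (∀ t : ℝ≥0, shiftOp t '' U = U) ∧
    IsAttracting j Hplus U ∧
    ∀ U' : Set C(ℝ≥0, E₀),
      (IsCompact U' ∧ BddFamilyE j U') → (∀ t : ℝ≥0, shiftOp t '' U' = U') →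
        IsAttracting j Hplus U' → U ⊆ U'

/-
The attractor is the closure of the union of the ω-limit sets `ω(B)` of the translation
semiflow, taken over all bounded `B ⊆ H⁺`. Since every such `B` is eventually translated into
the compact set `closure P`, each `ω(B)` lies in `closure P`, attracts `B`, and is strictly
invariant (a point of `ω(B)` has a preimage under `T(t)` by a nested-compact-sets argument).
Conversely any closed attracting set contains every `ω(B)`, which gives minimality.
Boundedness in `L∞(0,∞;E)` passes from `P` to its closure because, `E` being reflexive, closed
balls of `E` are weakly compact, so their images under `j` are closed in `E₀`.
-/

open Set omegaLimit Uniformity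

theorem isCompact_toWeakSpace_closedBall
    (hrefl : Function.Surjective (NormedSpace.inclusionInDoubleDual ℝ E)) (R : ℝ) :
    IsCompact (toWeakSpace ℝ E '' Metric.closedBall 0 R) := by
  set ι := NormedSpace.inclusionInDoubleDual ℝ E
  have hnorm : ∀ x, ‖ι x‖ = ‖x‖ := (NormedSpace.inclusionInDoubleDualLi ℝ (E := E)).norm_map
  let Ψ : WeakDual ℝ (StrongDual ℝ E) → WeakSpace ℝ E := fun φ =>
    toWeakSpace ℝ E (Function.surjInv hrefl (WeakDual.toStrongDual φ))
  have hΨ : Continuous Ψ := WeakBilin.continuous_of_continuous_eval _ fun f => by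
    have : ∀ φ, (topDualPairing ℝ E).flip (Ψ φ) f = φ f := fun φ =>
      congrArg (fun ψ : StrongDual ℝ (StrongDual ℝ E) => ψ f)
        (Function.surjInv_eq hrefl (WeakDual.toStrongDual φ))
    simpa only [this] using WeakDual.eval_continuous f
  have himage : Ψ '' (WeakDual.toStrongDual ⁻¹' Metric.closedBall 0 R) =
      toWeakSpace ℝ E '' Metric.closedBall 0 R := by
    ext y
    constructor
    · rintro ⟨φ, hφ, rfl⟩
      refine ⟨_, ?_, rfl⟩
      rw [mem_closedBall_zero_iff, ← hnorm, Function.surjInv_eq hrefl]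
      exact (mem_closedBall_zero_iff (a := WeakDual.toStrongDual φ)).mp hφ
    · rintro ⟨x, hx, rfl⟩
      have hιx : ‖ι x‖ ≤ R := (hnorm x).trans_le (mem_closedBall_zero_iff.mp hx)
      refine ⟨StrongDual.toWeakDual (ι x), (mem_closedBall_zero_iff (a := ι x)).mpr hιx, ?_⟩
      exact congrArg (toWeakSpace ℝ E)
        ((NormedSpace.inclusionInDoubleDualLi ℝ (E := E)).injective
          (Function.surjInv_eq hrefl (ι x)))
  exact himage ▸ (WeakDual.isCompact_closedBall 0 R).image hΨ

theorem isClosed_image_closedBall_of_surjective_inclusionInDoubleDual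
    (hrefl : Function.Surjective (NormedSpace.inclusionInDoubleDual ℝ E))
    (j : E →L[ℝ] E₀) (R : ℝ) : IsClosed (j '' Metric.closedBall 0 R) := by
  have hcomp : IsCompact (WeakSpace.map j '' (toWeakSpace ℝ E '' Metric.closedBall 0 R)) :=
    (isCompact_toWeakSpace_closedBall hrefl R).image (WeakSpace.map j).continuous
  rw [image_image] at hcomp
  exact hcomp.isClosed.preimage (toWeakSpaceCLM ℝ E₀).continuous

section OmegaLimit

variable {τ X : Type*} [TopologicalSpace X] {f : Filter τ} {ϕ : τ → X → X} {s c : Set X}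

theorem omegaLimit_subset_closure_of_eventually_mapsTo (h : ∀ᶠ t in f, MapsTo (ϕ t) s c) :
    ω f ϕ s ⊆ closure c :=
  (omegaLimit_subset_closure_image2 f ϕ s h).trans
    (closure_mono (image2_subset_iff.2 fun _ ht _ hx => ht hx))

theorem omegaLimit_atTop_eq_iInter [Preorder τ] [IsDirected τ (· ≤ ·)] [Nonempty τ] :
    ω atTop ϕ s = ⋂ h, closure (image2 ϕ (Ici h) s) :=
  Subset.antisymm
    (subset_iInter fun h => omegaLimit_subset_closure_image2 _ _ _ (Ici_mem_atTop h))
    (subset_iInter₂ fun u hu => by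
      obtain ⟨h, hh⟩ := mem_atTop_sets.1 hu
      exact iInter_subset_of_subset h
        (closure_mono (image2_subset_right fun t ht => hh t (mem_Ici.1 ht))))

end OmegaLimit

section Semiflow

variable {X : Type*} {ϕ : ℝ≥0 → X → X} {s c : Set X}

theorem image2_Ici_add (hϕ : ∀ s t x, ϕ t (ϕ s x) = ϕ (s + t) x) (h t : ℝ≥0) :
    image2 ϕ (Ici (h + t)) s = ϕ t '' image2 ϕ (Ici h) s := by
  ext y
  constructor
  · rintro ⟨r, hr, x, hx, rfl⟩
    have htr : t ≤ r := le_trans le_add_self hr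
    refine ⟨ϕ (r - t) x, mem_image2_of_mem (mem_Ici.2 (le_tsub_of_add_le_right hr)) hx, ?_⟩
    rw [hϕ, tsub_add_cancel_of_le htr]
  · rintro ⟨_, ⟨r, hr, x, hx, rfl⟩, rfl⟩
    exact ⟨r + t, mem_Ici.2 (add_le_add_left (mem_Ici.1 hr) t), x, hx, (hϕ r t x).symm⟩

variable [TopologicalSpace X]

theorem mapsTo_omegaLimit_atTop (hϕ : ∀ s t x, ϕ t (ϕ s x) = ϕ (s + t) x) {t : ℝ≥0}
    (hcont : Continuous (ϕ t)) : MapsTo (ϕ t) (ω atTop ϕ s) (ω atTop ϕ s) :=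
  (mapsTo_omegaLimit (ϕ' := fun r => ϕ (r + t)) s (mapsTo_id s) (fun r x => hϕ r t x)
    hcont).mono_right
    (omegaLimit_subset_of_tendsto ϕ s (tendsto_atTop_mono (fun _ => le_self_add) tendsto_id))

theorem omegaLimit_subset_image_omegaLimit [T2Space X] (hϕ : ∀ s t x, ϕ t (ϕ s x) = ϕ (s + t) x)
    {t : ℝ≥0} (hcont : Continuous (ϕ t)) (hc : IsCompact c)
    (habs : ∀ᶠ r in atTop, MapsTo (ϕ r) s c) : ω atTop ϕ s ⊆ ϕ t '' ω atTop ϕ s := by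
  obtain ⟨h₀, hh₀⟩ := eventually_atTop.1 habs
  set K : ℝ≥0 → Set X := fun h => closure (image2 ϕ (Ici (h₀ + h)) s)
  have hK_compact : ∀ h, IsCompact (K h) := fun h =>
    hc.of_isClosed_subset isClosed_closure (closure_minimal
      (image2_subset_iff.2 fun r hr x hx => hh₀ r (le_trans le_self_add hr) hx) hc.isClosed)
  have hK_anti : Antitone K := fun a b hab =>
    closure_mono (image2_subset_right (Ici_subset_Ici.2 (add_le_add_right hab h₀)))
  intro v hv
  -- Each `K h` meets the fibre of `ϕ t` over `v`; by compactness so does `⋂ h, K h ⊆ ω`.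
  have hfiber_nonempty : ∀ h, (K h ∩ ϕ t ⁻¹' {v}).Nonempty := fun h => by
    have hv' : v ∈ closure (image2 ϕ (Ici (h₀ + h + t)) s) :=
      omegaLimit_subset_closure_image2 _ _ _ (Ici_mem_atTop _) hv
    rw [image2_Ici_add hϕ, ← image_closure_of_isCompact (hK_compact h) hcont.continuousOn] at hv'
    obtain ⟨w, hw, hwv⟩ := hv'
    exact ⟨w, hw, hwv⟩
  obtain ⟨w, hw⟩ := IsCompact.nonempty_iInter_of_directed_nonempty_isCompact_isClosed
    (fun h => K h ∩ ϕ t ⁻¹' {v})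
    (fun a b => ⟨a ⊔ b, inter_subset_inter_left _ (hK_anti le_sup_left),
      inter_subset_inter_left _ (hK_anti le_sup_right)⟩)
    hfiber_nonempty (fun h => (hK_compact h).inter_right (isClosed_singleton.preimage hcont))
    (fun h => isClosed_closure.inter (isClosed_singleton.preimage hcont))
  simp only [mem_iInter, mem_inter_iff, mem_preimage, mem_singleton_iff] at hw
  refine ⟨w, ?_, (hw 0).2⟩
  rw [omegaLimit_atTop_eq_iInter]
  exact mem_iInter.2 fun h =>
    closure_mono (image2_subset_right (Ici_subset_Ici.2 le_add_self)) (hw h).1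

theorem image_omegaLimit_eq [T2Space X] (hϕ : ∀ s t x, ϕ t (ϕ s x) = ϕ (s + t) x)
    {t : ℝ≥0} (hcont : Continuous (ϕ t)) (hc : IsCompact c)
    (habs : ∀ᶠ r in atTop, MapsTo (ϕ r) s c) : ϕ t '' ω atTop ϕ s = ω atTop ϕ s :=
  Subset.antisymm (mapsTo_omegaLimit_atTop hϕ hcont).image_subset
    (omegaLimit_subset_image_omegaLimit hϕ hcont hc habs)

end Semiflow

section Attraction

variable {τ X : Type*} [UniformSpace X]

/-- `ϕ t x` approaches `A` uniformly in `x ∈ s` along `f`: the uniform-space form of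
`sup_{x ∈ s} dist (ϕ t x, A) → 0`. -/
def Attracts (f : Filter τ) (ϕ : τ → X → X) (A s : Set X) : Prop :=
  ∀ V ∈ 𝓤 X, ∀ᶠ t in f, ∀ x ∈ s, ∃ a ∈ A, (ϕ t x, a) ∈ V

variable {f : Filter τ} {ϕ : τ → X → X} {A A' s c : Set X}

theorem Attracts.mono (h : Attracts f ϕ A s) (hA : A ⊆ A') : Attracts f ϕ A' s :=
  fun V hV => (h V hV).mono fun _ ht x hx =>
    let ⟨a, ha, haV⟩ := ht x hx
    ⟨a, hA ha, haV⟩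

theorem attracts_omegaLimit [T2Space X] (hc : IsCompact c) (habs : ∀ᶠ t in f, MapsTo (ϕ t) s c) :
    Attracts f ϕ (ω f ϕ s) s := by
  intro V hV
  set n := interior (⋃ a ∈ ω f ϕ s, {y | (y, a) ∈ V})
  have hn : ω f ϕ s ⊆ n := fun a ha => mem_interior_iff_mem_nhds.2 <|
    mem_of_superset (mem_nhds_right a hV)
      (subset_biUnion_of_mem (u := fun a => {y | (y, a) ∈ V}) ha)
  filter_upwards [eventually_mapsTo_of_isCompact_absorbing_of_isOpen_of_omegaLimit_subset f ϕ s hc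
    habs isOpen_interior hn] with t ht x hx
  simpa only [mem_iUnion, mem_ofPred_eq, exists_prop] using interior_subset (ht hx)

theorem omegaLimit_subset_of_attracts (hA : IsClosed A) (h : Attracts f ϕ A s) : ω f ϕ s ⊆ A := by
  intro v hv
  rw [← hA.closure_eq, UniformSpace.mem_closure_iff_ball]
  intro V hV
  obtain ⟨W, hW, hWV⟩ := comp_mem_uniformity_sets hV
  have hfreq := (mem_omegaLimit_iff_frequently f ϕ s v).1 hv _ (UniformSpace.ball_mem_nhds v hW)
  obtain ⟨t, ⟨x, hx, hxv⟩, hattr⟩ := (hfreq.and_eventually (h W hW)).exists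
  obtain ⟨a, ha, haW⟩ := hattr x hx
  exact ⟨a, hWV ⟨ϕ t x, hxv, haW⟩, ha⟩

end Attraction

section Shift

variable {F : Type*} [NormedAddCommGroup F]

theorem shiftOp_shiftOp (s t : ℝ≥0) (u : C(ℝ≥0, F)) :
    shiftOp t (shiftOp s u) = shiftOp (s + t) u := by
  ext x
  show u (x + t + s) = u (x + (s + t))
  rw [add_assoc, add_comm t s]

theorem continuous_shiftOp (t : ℝ≥0) : Continuous (shiftOp (E₀ := F) t) :=
  ContinuousMap.continuous_precomp _

end Shift

section Trajectories

variable {j : E →L[ℝ] E₀}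

theorem isAttracting_iff {Hplus U : Set C(ℝ≥0, E₀)} :
    IsAttracting j Hplus U ↔ ∀ B ⊆ Hplus, BddFamilyE j B → Attracts atTop shiftOp U B := by
  simp only [IsAttracting, Attracts, eventually_atTop]

theorem BddFamilyE.mono {P U : Set C(ℝ≥0, E₀)} (hP : BddFamilyE j P) (hU : U ⊆ P) :
    BddFamilyE j U :=
  let ⟨R, hR⟩ := hP
  ⟨R, fun u hu => hR u (hU hu)⟩

theorem BddFamilyE.closure (hrefl : Function.Surjective (NormedSpace.inclusionInDoubleDual ℝ E))
    {P : Set C(ℝ≥0, E₀)} (hP : BddFamilyE j P) : BddFamilyE j (closure P) := by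
  obtain ⟨R, hR⟩ := hP
  refine ⟨R, fun u hu t => ?_⟩
  have hclosed : IsClosed {w : C(ℝ≥0, E₀) | w t ∈ j '' Metric.closedBall 0 R} :=
    (isClosed_image_closedBall_of_surjective_inclusionInDoubleDual hrefl j R).preimage
      (continuous_eval_const t)
  have hsub : P ⊆ {w | w t ∈ j '' Metric.closedBall 0 R} := fun w hw =>
    let ⟨x, hx, hxR⟩ := hR w hw t
    ⟨x, mem_closedBall_zero_iff.2 hxR, hx⟩
  obtain ⟨x, hxR, hx⟩ := closure_minimal hsub hclosed hu
  exact ⟨x, hx, mem_closedBall_zero_iff.1 hxR⟩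

end Trajectories

theorem exists_minimal_trajectory_attractor_general
    (j : E →L[ℝ] E₀)
    (hrefl : Function.Surjective (NormedSpace.inclusionInDoubleDual ℝ E))
    (Hplus : Set C(ℝ≥0, E₀))
    (P : Set C(ℝ≥0, E₀))
    (hPabs : IsAbsorbing j Hplus P)
    (hPcomp : IsCompact (closure P))
    (hPbdd : BddFamilyE j P) :
    ∃ U : Set C(ℝ≥0, E₀), IsMinTrajAttractor j Hplus U := by
  set 𝔅 := {B | B ⊆ Hplus ∧ BddFamilyE j B}
  have habs : ∀ B ∈ 𝔅, ∀ᶠ t in atTop, MapsTo (shiftOp t) B (closure P) := fun B hB =>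
    let ⟨h, hh⟩ := hPabs B hB.1 hB.2
    eventually_atTop.2 ⟨h, fun t ht u hu => subset_closure (hh t ht ⟨u, hu, rfl⟩)⟩
  set W := ⋃ B ∈ 𝔅, ω atTop shiftOp B
  have hWP : closure W ⊆ closure P := closure_minimal (iUnion₂_subset fun B hB =>
    (omegaLimit_subset_closure_of_eventually_mapsTo (habs B hB)).trans_eq closure_closure)
    isClosed_closure
  have hWcomp : IsCompact (closure W) := hPcomp.of_isClosed_subset isClosed_closure hWP
  refine ⟨closure W, ⟨hWcomp, (hPbdd.closure hrefl).mono hWP⟩, fun t => ?_,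
    isAttracting_iff.2 fun B hB hBd => ?_, ?_⟩
  · rw [image_closure_of_isCompact hWcomp (continuous_shiftOp t).continuousOn, image_iUnion₂]
    exact congrArg closure (iUnion₂_congr fun B hB =>
      image_omegaLimit_eq shiftOp_shiftOp (continuous_shiftOp t) hPcomp (habs B hB))
  · exact (attracts_omegaLimit hPcomp (habs B ⟨hB, hBd⟩)).mono
      (subset_closure.trans' (subset_biUnion_of_mem (u := fun B => ω atTop shiftOp B) ⟨hB, hBd⟩))
  · rintro U' ⟨hU'comp, -⟩ - hU'attr
    exact closure_minimal (iUnion₂_subset fun B hB => omegaLimit_subset_of_attracts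
      hU'comp.isClosed (isAttracting_iff.1 hU'attr B hB.1 hB.2)) hU'comp.isClosed

/-- If the trajectory space `Hplus ⊆ C([0,∞);E₀) ∩ L∞(0,∞;E)` (with `E` a reflexive Banach
space continuously embedded in the Banach space `E₀` via `j`) admits an absorbing set `P`
which is relatively compact in `C([0,∞); E₀)` and bounded in `L∞(0,∞;E)`, then `Hplus`
possesses a minimal trajectory attractor. -/
theorem exists_minimal_trajectory_attractor
    [CompleteSpace E] [CompleteSpace E₀]
    (j : E →L[ℝ] E₀) (hj : Function.Injective j)
    (hrefl : Function.Surjective (NormedSpace.inclusionInDoubleDual ℝ E))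
    (Hplus : Set C(ℝ≥0, E₀)) (hH : ∀ u ∈ Hplus, MemLinftyE j u)
    (P : Set C(ℝ≥0, E₀)) (hP : ∀ u ∈ P, MemLinftyE j u)
    (hPabs : IsAbsorbing j Hplus P)
    (hPcomp : IsCompact (closure P))
    (hPbdd : BddFamilyE j P) :
    ∃ U : Set C(ℝ≥0, E₀), IsMinTrajAttractor j Hplus U :=
  exists_minimal_trajectory_attractor_general j hrefl Hplus P hPabs hPcomp hPbdd
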